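/- Let G be a plane graph with a quasi-contractible vertex v of degree 2 whose two neighbors a and b are joined by an edge. Then in any planar straight-line drawing of G in which the triangle on a, b, v bounds an empty face, contracting v onto a (replacing v by the point of a and removing v's edges) yields a planar straight-line drawing of G / (v,a), and this contraction, viewed as the linear motion of v along segment from pos(v) to pos(a) with all other vertices fixed, keeps all edges incident to v inside the triangle a, b, v at all times, hence preserves planarity. -/

import Mathlib

/-!
Since the only neighbours `a`, `b` of `v` are adjacent, contracting `v` onto `a` creates no new
edge, so `G / (v,a)` is a subgraph of `G` and inherits the drawing. The moving point
`P = lin t (pos v) (pos a)` stays on the side `[pos v, pos a]` of the triangle `T` spanned by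
`pos a`, `pos b`, `pos v`, hence the moving edges `[P, pos a]`, `[P, pos b]` stay in `T`; they
meet only at `P`, since the barycentric coordinate of `pos b` vanishes on `[P, pos a]` and only
at `P` on `[P, pos b]`.

`T` is non-degenerate, as three collinear points joined pairwise by edges would overlap. An edge
`xy` avoiding `v` meets `T` only on the side `[pos a, pos b]`: the part of `[pos x, pos y]` where
the barycentric coordinate `γ` of `pos v` is positive is connected, so if it met `T` it would
either cross the frontier of `T` on a side `[pos a, pos v]` or `[pos b, pos v]`, where planarity
forces the crossing point to be `pos a` or `pos b` (with `γ = 0`), or contain an endpoint of `xy`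
inside `T`, which the empty face forbids. For `t < 1` the point `P` has `γ = 1 - t > 0`, so
`[P, pos z]` meets such an edge only at `pos z`.
-/

/-- No two distinct edges of `G`, drawn via `pos`, intersect except at images of
common end-vertices. -/
def NoncrossPos {V : Type*} (G : SimpleGraph V) (pos : V → ℝ × ℝ) : Prop :=
  ∀ e₁ ∈ G.edgeSet, ∀ e₂ ∈ G.edgeSet, e₁ ≠ e₂ →
    ∀ a b c d : V, e₁ = s(a, b) → e₂ = s(c, d) →
      segment ℝ (pos a) (pos b) ∩ segment ℝ (pos c) (pos d) ⊆
        pos '' {x | x ∈ e₁ ∧ x ∈ e₂}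

/-- The graph `G / (v,a)`: `v` is contracted onto `a` (each edge `(v,x)` is replaced
by `(a,x)`, duplicates removed, and `v` becomes isolated). -/
def contractOnto {V : Type*} (G : SimpleGraph V) (v a : V) : SimpleGraph V :=
  SimpleGraph.fromRel (fun x y =>
    x ≠ v ∧ y ≠ v ∧ (G.Adj x y ∨ (x = a ∧ G.Adj v y) ∨ (y = a ∧ G.Adj v x)))

/-- Linear interpolation of points. -/
def lin (t : ℝ) (A B : ℝ × ℝ) : ℝ × ℝ := (1 - t) • A + t • B

open Set

theorem AffineMap.nonpos_of_mem_segment_of_mem {E : Type*} [AddCommGroup E] [Module ℝ E]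
    [TopologicalSpace E] [ContinuousAdd E] [ContinuousSMul ℝ E] {s : Set E} (f : E →ᵃ[ℝ] ℝ)
    {x y z : E} (hx : x ∈ s → f x ≤ 0) (hy : y ∈ s → f y ≤ 0)
    (hfr : ∀ w ∈ segment ℝ x y, w ∈ frontier s → f w ≤ 0)
    (hz : z ∈ segment ℝ x y) (hzs : z ∈ s) : f z ≤ 0 := by
  by_contra! hfz
  have hint : ∀ w ∈ segment ℝ x y ∩ f ⁻¹' Ioi 0, w ∈ closure s → w ∈ interior s :=
    fun w hw hwc => by
      rw [← closure_sdiff_frontier]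
      exact mem_sdiff_of_mem hwc fun hwfr => (hfr w hw.1 hwfr).not_gt hw.2
  have hzS : z ∈ segment ℝ x y ∩ f ⁻¹' Ioi 0 := ⟨hz, hfz⟩
  -- the part of the segment where `f > 0` is connected and misses `frontier s`
  have hSs : segment ℝ x y ∩ f ⁻¹' Ioi 0 ⊆ s := by
    have hS : IsPreconnected (segment ℝ x y ∩ f ⁻¹' Ioi 0) :=
      ((convex_segment x y).inter ((convex_Ioi 0).affine_preimage f)).isPreconnected
    refine (hS.subset_left_of_subset_union isOpen_interior isClosed_closure.isOpen_compl
      (disjoint_compl_right.mono_left interior_subset_closure) (fun w hw => ?_)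
      ⟨z, hzS, hint z hzS (subset_closure hzs)⟩).trans interior_subset
    by_cases hwc : w ∈ closure s
    · exact Or.inl (hint w hw hwc)
    · exact Or.inr hwc
  obtain ⟨c, d, hc, hd, hcd, rfl⟩ := hz
  rw [Convex.combo_affine_apply hcd, smul_eq_mul, smul_eq_mul] at hfz
  by_cases hfx : 0 < f x
  · exact (hx (hSs ⟨left_mem_segment ℝ x y, hfx⟩)).not_gt hfx
  · have hfy : 0 < f y := by nlinarith
    exact (hy (hSs ⟨right_mem_segment ℝ x y, hfy⟩)).not_gt hfy

theorem AffineMap.eq_of_mem_segment_of_apply_eq_zero {E : Type*} [AddCommGroup E] [Module ℝ E]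
    (f : E →ᵃ[ℝ] ℝ) {x y z : E} (hx : f x = 0) (hy : f y ≠ 0) (hz : z ∈ segment ℝ x y)
    (hfz : f z = 0) : z = x := by
  obtain ⟨c, d, -, -, hcd, rfl⟩ := hz
  rw [Convex.combo_affine_apply hcd, hx, smul_eq_mul, smul_eq_mul, mul_zero, zero_add,
    mul_eq_zero] at hfz
  obtain rfl : d = 0 := hfz.resolve_right hy
  simp [show c = 1 by linarith]

theorem AffineBasis.mem_segment_of_coord_eq_zero {ι E : Type*} [Fintype ι] [AddCommGroup E]
    [Module ℝ E] (b : AffineBasis ι ℝ E) {j k : ι} (hjk : j ≠ k) {x : E}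
    (hj : 0 ≤ b.coord j x) (hk : 0 ≤ b.coord k x)
    (hzero : ∀ l, l ≠ j → l ≠ k → b.coord l x = 0) : x ∈ segment ℝ (b j) (b k) := by
  classical
  have hsum : b.coord j x + b.coord k x = 1 := by
    rw [← b.sum_coord_apply_eq_one x,
      Finset.sum_eq_add j k hjk (fun l _ hl => hzero l hl.1 hl.2) (by simp) (by simp)]
  refine ⟨b.coord j x, b.coord k x, hj, hk, hsum, b.ext_elem fun l => ?_⟩
  rw [Convex.combo_affine_apply hsum, b.coord_apply, b.coord_apply, smul_eq_mul, smul_eq_mul]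
  by_cases hl : l = j
  · subst hl; simp [hjk]
  · by_cases hl' : l = k
    · subst hl'; simp [hl]
    · simp [hl, hl', hzero l hl hl']

theorem AffineBasis.exists_coord_eq_zero_of_mem_frontier {ι E : Type*} [Finite ι]
    [NormedAddCommGroup E] [NormedSpace ℝ E] (b : AffineBasis ι ℝ E) {x : E}
    (hx : x ∈ frontier (convexHull ℝ (range b))) :
    (∀ i, 0 ≤ b.coord i x) ∧ ∃ i, b.coord i x = 0 := by
  have hmem : x ∈ convexHull ℝ (range b) :=
    ((finite_range b).isCompact_convexHull ℝ).isClosed.frontier_subset hx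
  rw [b.convexHull_eq_nonneg_coord] at hmem
  have hint := hx.2
  rw [b.interior_convexHull, mem_ofPred_eq] at hint
  push Not at hint
  obtain ⟨i, hi⟩ := hint
  exact ⟨hmem, i, le_antisymm hi (hmem i)⟩

noncomputable def triangleBasis {A B C : ℝ × ℝ} (h : ¬Collinear ℝ {A, B, C}) :
    AffineBasis (Fin 3) ℝ (ℝ × ℝ) where
  toFun := ![A, B, C]
  ind' := affineIndependent_iff_not_collinear_set.2 h
  tot' := by
    rw [(affineIndependent_iff_not_collinear_set.2 h).affineSpan_eq_top_iff_card_eq_finrank_add_one]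
    simp

section Triangle

variable {A B C : ℝ × ℝ} (h : ¬Collinear ℝ {A, B, C})

theorem range_triangleBasis : range (triangleBasis h) = {A, B, C} := by
  change range ![A, B, C] = _
  simp only [Matrix.range_cons, Matrix.range_empty, union_empty, singleton_union]

theorem triangleBasis_coord_left (i : Fin 3) :
    (triangleBasis h).coord i A = if i = 0 then 1 else 0 :=
  (triangleBasis h).coord_apply i 0

theorem triangleBasis_coord_middle (i : Fin 3) :
    (triangleBasis h).coord i B = if i = 1 then 1 else 0 :=
  (triangleBasis h).coord_apply i 1

theorem triangleBasis_coord_right (i : Fin 3) :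
    (triangleBasis h).coord i C = if i = 2 then 1 else 0 :=
  (triangleBasis h).coord_apply i 2

end Triangle

theorem lin_mem_segment {t : ℝ} (ht : t ∈ Icc (0 : ℝ) 1) (X Y : ℝ × ℝ) :
    lin t X Y ∈ segment ℝ X Y :=
  ⟨1 - t, t, by linarith [ht.2], ht.1, by ring, rfl⟩

theorem AffineMap.apply_lin (f : ℝ × ℝ →ᵃ[ℝ] ℝ) (t : ℝ) (X Y : ℝ × ℝ) :
    f (lin t X Y) = (1 - t) * f X + t * f Y :=
  Convex.combo_affine_apply (by ring)

theorem segment_lin_inter_segment_subset {A B C : ℝ × ℝ} (hnc : ¬Collinear ℝ {A, B, C})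
    (t : ℝ) : segment ℝ (lin t C A) A ∩ segment ℝ (lin t C A) B ⊆ {lin t C A} := by
  set f := (triangleBasis hnc).coord 1
  have hP : f (lin t C A) = 0 := by
    simp [f, AffineMap.apply_lin, triangleBasis_coord_left, triangleBasis_coord_right]
  rintro r ⟨hrA, hrB⟩
  have hfA : f A = 0 := by simp [f, triangleBasis_coord_left]
  have hfr : f r = 0 :=
    (convex_singleton 0).affine_preimage f |>.segment_subset hP hfA hrA
  exact f.eq_of_mem_segment_of_apply_eq_zero hP (by simp [f, triangleBasis_coord_middle]) hrB hfr

theorem Sym2.mk_ne_mk_of_ne_of_ne {α : Type*} {x y z v : α} (hx : x ≠ v) (hy : y ≠ v) :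
    s(x, y) ≠ s(z, v) := fun he => by
  rcases Sym2.mem_iff.1 (he ▸ Sym2.mem_mk_right z v : v ∈ s(x, y)) with rfl | rfl
  exacts [hx rfl, hy rfl]

theorem SimpleGraph.adj_iff_of_neighborSet_eq {V : Type*} {G : SimpleGraph V} {v a b : V}
    (h : G.neighborSet v = {a, b}) (w : V) : G.Adj v w ↔ w = a ∨ w = b := by
  rw [← SimpleGraph.mem_neighborSet, h, mem_insert_iff, mem_singleton_iff]

theorem contractOnto_le {V : Type*} {G : SimpleGraph V} {v a : V}
    (h : ∀ x, G.Adj v x → x ≠ a → G.Adj a x) : contractOnto G v a ≤ G := by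
  have hrel : ∀ x y, x ≠ y →
      (x ≠ v ∧ y ≠ v ∧ (G.Adj x y ∨ (x = a ∧ G.Adj v y) ∨ (y = a ∧ G.Adj v x))) → G.Adj x y := by
    rintro x y hxy ⟨-, -, hadj | ⟨rfl, hvy⟩ | ⟨rfl, hvx⟩⟩
    · exact hadj
    · exact h y hvy hxy.symm
    · exact (h x hvx hxy).symm
  rintro x y ⟨hxy, hr | hr⟩
  · exact hrel x y hxy hr
  · exact (hrel y x hxy.symm hr).symm

def edgeSegment {V : Type*} (pos : V → ℝ × ℝ) : Sym2 V → Set (ℝ × ℝ) :=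
  Sym2.lift ⟨fun x y => segment ℝ (pos x) (pos y), fun x y => segment_symm ℝ (pos x) (pos y)⟩

@[simp] theorem edgeSegment_mk {V : Type*} (pos : V → ℝ × ℝ) (x y : V) :
    edgeSegment pos s(x, y) = segment ℝ (pos x) (pos y) := rfl

theorem noncrossPos_iff {V : Type*} {G : SimpleGraph V} {pos : V → ℝ × ℝ} :
    NoncrossPos G pos ↔ ∀ e₁ ∈ G.edgeSet, ∀ e₂ ∈ G.edgeSet, e₁ ≠ e₂ →
      edgeSegment pos e₁ ∩ edgeSegment pos e₂ ⊆ pos '' {u | u ∈ e₁ ∧ u ∈ e₂} := by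
  refine ⟨fun h e₁ he₁ e₂ he₂ hne => ?_, fun h e₁ he₁ e₂ he₂ hne x y z w h₁ h₂ => ?_⟩
  · induction e₁ using Sym2.ind
    induction e₂ using Sym2.ind
    exact h _ he₁ _ he₂ hne _ _ _ _ rfl rfl
  · subst h₁ h₂
    exact h _ he₁ _ he₂ hne

theorem SimpleGraph.notMem_or_exists_eq_mk_of_mem_edgeSet {V : Type*} {G : SimpleGraph V}
    (v : V) {e : Sym2 V} (he : e ∈ G.edgeSet) : v ∉ e ∨ ∃ z, G.Adj v z ∧ e = s(v, z) := by
  induction e using Sym2.ind with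
  | h x y =>
  by_cases hx : v = x
  · exact Or.inr ⟨y, hx ▸ he, hx ▸ rfl⟩
  by_cases hy : v = y
  · exact Or.inr ⟨x, hy ▸ G.adj_symm he, hy ▸ Sym2.eq_swap⟩
  exact Or.inl (by simp [hx, hy])

namespace NoncrossPos

variable {V : Type*} {G H : SimpleGraph V} {pos : V → ℝ × ℝ}

theorem mono (h : NoncrossPos G pos) (hHG : H ≤ G) : NoncrossPos H pos :=
  fun e₁ he₁ e₂ he₂ =>
    h e₁ (SimpleGraph.edgeSet_mono hHG he₁) e₂ (SimpleGraph.edgeSet_mono hHG he₂)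

theorem exists_common_vertex (h : NoncrossPos G pos) {x y z w : V} (hxy : G.Adj x y)
    (hzw : G.Adj z w) (hne : s(x, y) ≠ s(z, w)) {r : ℝ × ℝ}
    (hr₁ : r ∈ segment ℝ (pos x) (pos y)) (hr₂ : r ∈ segment ℝ (pos z) (pos w)) :
    ∃ u ∈ s(x, y), u ∈ s(z, w) ∧ pos u = r := by
  obtain ⟨u, ⟨hu₁, hu₂⟩, rfl⟩ := h _ hxy _ hzw hne x y z w rfl rfl ⟨hr₁, hr₂⟩
  exact ⟨u, hu₁, hu₂, rfl⟩

theorem pos_notMem_segment (h : NoncrossPos G pos) (hinj : Function.Injective pos) {x y z : V}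
    (hxy : G.Adj x y) (hxz : G.Adj x z) (hyz : y ≠ z) : pos z ∉ segment ℝ (pos x) (pos y) := by
  intro hz
  have hne : s(x, y) ≠ s(x, z) := fun he => hyz (Sym2.congr_right.1 he)
  obtain ⟨u, hu₁, hu₂, hu⟩ := h.exists_common_vertex hxy hxz hne hz (right_mem_segment ℝ _ _)
  obtain rfl := hinj hu
  rcases Sym2.mem_iff.1 hu₁ with rfl | rfl
  · exact hxz.ne rfl
  · exact hyz rfl

theorem not_collinear (h : NoncrossPos G pos) (hinj : Function.Injective pos) {a b c : V}
    (hab : G.Adj a b) (hbc : G.Adj b c) (hca : G.Adj c a) :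
    ¬Collinear ℝ {pos a, pos b, pos c} := by
  intro hcol
  rcases hcol.wbtw_or_wbtw_or_wbtw with h' | h' | h'
  · exact h.pos_notMem_segment hinj hca.symm hab hbc.ne.symm h'.mem_segment
  · exact h.pos_notMem_segment hinj hab.symm hbc hca.ne.symm h'.mem_segment
  · exact h.pos_notMem_segment hinj hbc.symm hca hab.ne.symm h'.mem_segment

theorem update [DecidableEq V] (h : NoncrossPos G pos) {v : V} {p : ℝ × ℝ}
    (hstar : ∀ z x y, G.Adj v z → G.Adj x y → x ≠ v → y ≠ v →
      ∀ r ∈ segment ℝ p (pos z), r ∈ segment ℝ (pos x) (pos y) → r = pos z ∧ z ∈ s(x, y))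
    (hfan : ∀ z z', G.Adj v z → G.Adj v z' → z ≠ z' →
      segment ℝ p (pos z) ∩ segment ℝ p (pos z') ⊆ {p}) :
    NoncrossPos G (Function.update pos v p) := by
  rw [noncrossPos_iff] at h ⊢
  have hfix : ∀ e : Sym2 V, v ∉ e →
      edgeSegment (Function.update pos v p) e = edgeSegment pos e := by
    intro e hv
    induction e using Sym2.ind with
    | h x y =>
    rw [Sym2.mem_iff, not_or] at hv
    simp [Function.update_of_ne (Ne.symm hv.1), Function.update_of_ne (Ne.symm hv.2)]
  have hmove : ∀ z, G.Adj v z →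
      edgeSegment (Function.update pos v p) s(v, z) = segment ℝ p (pos z) := by
    intro z hz
    simp [Function.update_of_ne hz.ne.symm]
  intro e₁ he₁ e₂ he₂ hne
  wlog hv : v ∈ e₁ ∨ v ∉ e₂ generalizing e₁ e₂
  · rw [inter_comm]
    simpa only [and_comm] using this e₂ he₂ e₁ he₁ hne.symm (by tauto)
  rcases G.notMem_or_exists_eq_mk_of_mem_edgeSet v he₁ with hv₁ | ⟨z, hz, rfl⟩
  · have hv₂ : v ∉ e₂ := hv.resolve_left hv₁
    rw [hfix e₁ hv₁, hfix e₂ hv₂]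
    rintro r hr
    obtain ⟨u, hu, rfl⟩ := h e₁ he₁ e₂ he₂ hne hr
    exact ⟨u, hu, Function.update_of_ne (by rintro rfl; exact hv₁ hu.1) _ _⟩
  rcases G.notMem_or_exists_eq_mk_of_mem_edgeSet v he₂ with hv₂ | ⟨z', hz', rfl⟩
  · induction e₂ using Sym2.ind with
    | h x y =>
    rw [Sym2.mem_iff, not_or] at hv₂
    rw [hmove z hz, hfix _ (by simpa using hv₂)]
    rintro r ⟨hr₁, hr₂⟩
    obtain ⟨rfl, hzxy⟩ := hstar z x y hz he₂ (Ne.symm hv₂.1) (Ne.symm hv₂.2) r hr₁ hr₂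
    exact ⟨z, ⟨Sym2.mem_mk_right v z, hzxy⟩, Function.update_of_ne hz.ne.symm _ _⟩
  · rw [hmove z hz, hmove z' hz']
    intro r hr
    obtain rfl := hfan z z' hz hz' (fun hzz => hne (hzz ▸ rfl)) hr
    exact ⟨v, ⟨Sym2.mem_mk_left v z, Sym2.mem_mk_left v z'⟩, Function.update_self _ _ _⟩

theorem coord_eq_zero_of_mem_convexHull (h : NoncrossPos G pos) {v a b : V}
    (hva : G.Adj v a) (hvb : G.Adj v b)
    (hempty : ∀ x : V,
      pos x ∈ convexHull ℝ ({pos a, pos b, pos v} : Set (ℝ × ℝ)) → x ∈ ({a, b, v} : Set V))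
    (hnc : ¬Collinear ℝ {pos a, pos b, pos v}) {x y : V} (hxy : G.Adj x y) (hx : x ≠ v)
    (hy : y ≠ v) {r : ℝ × ℝ} (hr : r ∈ segment ℝ (pos x) (pos y))
    (hrT : r ∈ convexHull ℝ {pos a, pos b, pos v}) : (triangleBasis hnc).coord 2 r = 0 := by
  set β := triangleBasis hnc
  have hT : convexHull ℝ {pos a, pos b, pos v} = convexHull ℝ (range β) := by
    rw [range_triangleBasis]
  have hβa : β.coord 2 (pos a) = 0 := by simp [β, triangleBasis_coord_left]
  have hβb : β.coord 2 (pos b) = 0 := by simp [β, triangleBasis_coord_middle]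
  have hvert : ∀ u, u ≠ v → pos u ∈ convexHull ℝ {pos a, pos b, pos v} →
      β.coord 2 (pos u) ≤ 0 := by
    intro u hu huT
    rcases hempty u huT with rfl | rfl | rfl
    · exact hβa.le
    · exact hβb.le
    · exact absurd rfl hu
  have hside : ∀ z, G.Adj v z → β.coord 2 (pos z) = 0 →
      ∀ w ∈ segment ℝ (pos x) (pos y), w ∈ segment ℝ (pos z) (pos v) → β.coord 2 w ≤ 0 := by
    intro z hz hz0 w hw hwz
    obtain ⟨u, hu₁, hu₂, rfl⟩ :=
      h.exists_common_vertex hxy hz.symm (Sym2.mk_ne_mk_of_ne_of_ne hx hy) hw hwz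
    rcases Sym2.mem_iff.1 hu₂ with rfl | rfl
    · exact hz0.le
    · rcases Sym2.mem_iff.1 hu₁ with rfl | rfl
      exacts [absurd rfl hx, absurd rfl hy]
  refine le_antisymm (β.coord 2 |>.nonpos_of_mem_segment_of_mem (hvert x hx) (hvert y hy)
    (fun w hw hwfr => ?_) hr hrT) ((β.convexHull_eq_nonneg_coord ▸ hT ▸ hrT : _) 2)
  obtain ⟨hnn, i, hi⟩ := β.exists_coord_eq_zero_of_mem_frontier (hT ▸ hwfr)
  fin_cases i
  · refine hside b hvb hβb w hw (β.mem_segment_of_coord_eq_zero (j := 1) (k := 2) (by decide)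
      (hnn 1) (hnn 2) fun l hl₁ hl₂ => ?_)
    fin_cases l <;> simp_all
  · refine hside a hva hβa w hw (β.mem_segment_of_coord_eq_zero (j := 0) (k := 2) (by decide)
      (hnn 0) (hnn 2) fun l hl₁ hl₂ => ?_)
    fin_cases l <;> simp_all
  · exact hi.le

theorem eq_and_mem_of_mem_segment_lin (h : NoncrossPos G pos) (hinj : Function.Injective pos)
    {v a b : V} (hnbrs : G.neighborSet v = {a, b})
    (hempty : ∀ x : V,
      pos x ∈ convexHull ℝ ({pos a, pos b, pos v} : Set (ℝ × ℝ)) → x ∈ ({a, b, v} : Set V))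
    (hnc : ¬Collinear ℝ {pos a, pos b, pos v}) {t : ℝ} (ht : t ∈ Ico (0 : ℝ) 1)
    {z x y : V} (hz : G.Adj v z) (hxy : G.Adj x y) (hx : x ≠ v) (hy : y ≠ v) {r : ℝ × ℝ}
    (hr₁ : r ∈ segment ℝ (lin t (pos v) (pos a)) (pos z))
    (hr₂ : r ∈ segment ℝ (pos x) (pos y)) : r = pos z ∧ z ∈ s(x, y) := by
  have hadj := SimpleGraph.adj_iff_of_neighborSet_eq hnbrs
  set f := (triangleBasis hnc).coord 2
  have hz0 : f (pos z) = 0 := by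
    rcases (hadj z).1 hz with rfl | rfl
    · simp [f, triangleBasis_coord_left]
    · simp [f, triangleBasis_coord_middle]
  have hP : f (lin t (pos v) (pos a)) ≠ 0 := by
    simp [f, AffineMap.apply_lin, triangleBasis_coord_left, triangleBasis_coord_right]
    linarith [ht.2]
  have hrT : r ∈ convexHull ℝ {pos a, pos b, pos v} := by
    refine (convex_convexHull ℝ _).segment_subset (segment_subset_convexHull (by simp) (by simp)
      (lin_mem_segment (Ico_subset_Icc_self ht) _ _)) (subset_convexHull ℝ _ ?_) hr₁
    rcases (hadj z).1 hz with rfl | rfl <;> simp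
  have hr0 : f r = 0 := h.coord_eq_zero_of_mem_convexHull ((hadj a).2 (Or.inl rfl))
    ((hadj b).2 (Or.inr rfl)) hempty hnc hxy hx hy hr₂ hrT
  rw [segment_symm] at hr₁
  obtain rfl : r = pos z := f.eq_of_mem_segment_of_apply_eq_zero hz0 hP hr₁ hr0
  obtain ⟨u, hu, -, hpos⟩ := h.exists_common_vertex hxy hz.symm (Sym2.mk_ne_mk_of_ne_of_ne hx hy)
    hr₂ (left_mem_segment ℝ _ _)
  exact ⟨rfl, hinj hpos ▸ hu⟩

end NoncrossPos

theorem contract_degree_two_vertex_planar_general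
    {V : Type*} [DecidableEq V] (G : SimpleGraph V)
    (pos : V → ℝ × ℝ) (hinj : Function.Injective pos)
    (hplanar : NoncrossPos G pos)
    (v a b : V) (hab : G.Adj a b)
    (hnbrs : G.neighborSet v = {a, b})
    (hempty : ∀ x : V,
      pos x ∈ convexHull ℝ ({pos a, pos b, pos v} : Set (ℝ × ℝ)) →
        x ∈ ({a, b, v} : Set V)) :
    NoncrossPos (contractOnto G v a) pos ∧
      (∀ t ∈ Set.Icc (0 : ℝ) 1,
        segment ℝ (lin t (pos v) (pos a)) (pos a) ⊆
            convexHull ℝ ({pos a, pos b, pos v} : Set (ℝ × ℝ)) ∧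
          segment ℝ (lin t (pos v) (pos a)) (pos b) ⊆
            convexHull ℝ ({pos a, pos b, pos v} : Set (ℝ × ℝ))) ∧
      (∀ t ∈ Set.Ico (0 : ℝ) 1,
        NoncrossPos G (Function.update pos v (lin t (pos v) (pos a)))) := by
  have hadj := SimpleGraph.adj_iff_of_neighborSet_eq hnbrs
  have hva : G.Adj v a := (hadj a).2 (Or.inl rfl)
  have hvb : G.Adj v b := (hadj b).2 (Or.inr rfl)
  have hnc := hplanar.not_collinear hinj hab hvb.symm hva
  refine ⟨hplanar.mono (contractOnto_le fun x hx hxa => ?_), fun t ht => ?_, fun t ht => ?_⟩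
  · obtain rfl := ((hadj x).1 hx).resolve_left hxa
    exact hab
  · have hP : lin t (pos v) (pos a) ∈ convexHull ℝ {pos a, pos b, pos v} :=
      segment_subset_convexHull (by simp) (by simp) (lin_mem_segment ht _ _)
    exact ⟨(convex_convexHull ℝ _).segment_subset hP (subset_convexHull ℝ _ (by simp)),
      (convex_convexHull ℝ _).segment_subset hP (subset_convexHull ℝ _ (by simp))⟩
  · refine hplanar.update (fun z x y hz hxy hx hy r hr₁ hr₂ =>
      hplanar.eq_and_mem_of_mem_segment_lin hinj hnbrs hempty hnc ht hz hxy hx hy hr₁ hr₂)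
      fun z z' hz hz' hzz' => ?_
    rcases (hadj z).1 hz with rfl | rfl <;> rcases (hadj z').1 hz' with rfl | rfl
    · exact absurd rfl hzz'
    · exact segment_lin_inter_segment_subset hnc t
    · exact (inter_comm _ _).subset.trans (segment_lin_inter_segment_subset hnc t)
    · exact absurd rfl hzz'

/-- Let `v` be a (quasi-contractible) vertex of degree 2 whose two neighbors `a`, `b`
are joined by an edge, and suppose the triangle `a, b, v` bounds an empty face of the
planar straight-line drawing `pos` of `G`.  Then contracting `v` onto `a` yields a
planar straight-line drawing of `G / (v,a)`, and the linear motion of `v` along the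
segment from `pos v` to `pos a` (all other vertices fixed) keeps the edges incident
to `v` inside the triangle `a, b, v` at all times, hence preserves planarity. -/
theorem contract_degree_two_vertex_planar
    {V : Type*} [DecidableEq V] (G : SimpleGraph V) [DecidableRel G.Adj]
    (pos : V → ℝ × ℝ) (hinj : Function.Injective pos)
    (hplanar : NoncrossPos G pos)
    (v a b : V) (hab : G.Adj a b)
    (hnbrs : G.neighborSet v = {a, b})
    (hempty : ∀ x : V,
      pos x ∈ convexHull ℝ ({pos a, pos b, pos v} : Set (ℝ × ℝ)) →
        x ∈ ({a, b, v} : Set V)) :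
    NoncrossPos (contractOnto G v a) pos ∧
      (∀ t ∈ Set.Icc (0 : ℝ) 1,
        segment ℝ (lin t (pos v) (pos a)) (pos a) ⊆
            convexHull ℝ ({pos a, pos b, pos v} : Set (ℝ × ℝ)) ∧
          segment ℝ (lin t (pos v) (pos a)) (pos b) ⊆
            convexHull ℝ ({pos a, pos b, pos v} : Set (ℝ × ℝ))) ∧
      (∀ t ∈ Set.Ico (0 : ℝ) 1,
        NoncrossPos G (Function.update pos v (lin t (pos v) (pos a)))) :=
  contract_degree_two_vertex_planar_general G pos hinj hplanar v a b hab hnbrs hempty
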